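/- Let G be a simple graph on n vertices with m edges and let c = (c_1,…,c_s) be a composition of n. For each i ∈ [s], the variance of M_i(G) under a uniformly random c-coloring equals (c_i^{(3)}(n − c_i)/n^{(4)})·Σ_2(G) − ( [c_i^{(2)}/n^{(2)}]² − c_i^{(4)}/n^{(4)} )·m² + ( c_i^{(2)}/n^{(2)} − 2·c_i^{(3)}/n^{(3)} + c_i^{(4)}/n^{(4)} )·m, where Σ_2(G) is the sum of the squares of the vertex degrees of G and x^{(b)} denotes the falling factorial. -/

import Mathlib

open Finset MeasureTheory Filter
open scoped Classical

/-- The finset of `c`-colorings of the vertex set `Fin n` with `s` colors: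
maps `f : Fin n → Fin s` whose color class of color `i` has exactly `c i` elements. -/
noncomputable def colorings (n s : ℕ) (c : Fin s → ℕ) : Finset (Fin n → Fin s) :=
  Finset.univ.filter fun f => ∀ i, (Finset.univ.filter fun v => f v = i).card = c i

/-- Probability of an event under the uniform measure on the set of `c`-colorings. -/
noncomputable def colProb (n s : ℕ) (c : Fin s → ℕ) (E : (Fin n → Fin s) → Prop) : ℝ :=
  (((colorings n s c).filter fun f => E f).card : ℝ) / ((colorings n s c).card : ℝ)

/-- Expectation of a real statistic under the uniform measure on `c`-colorings. -/
noncomputable def colExp (n s : ℕ) (c : Fin s → ℕ) (Y : (Fin n → Fin s) → ℝ) : ℝ :=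
  (∑ f ∈ colorings n s c, Y f) / ((colorings n s c).card : ℝ)

/-- Variance of a real statistic under the uniform measure on `c`-colorings. -/
noncomputable def colVar (n s : ℕ) (c : Fin s → ℕ) (Y : (Fin n → Fin s) → ℝ) : ℝ :=
  colExp n s c fun f => (Y f - colExp n s c Y) ^ 2

/-- The number of edges of `G`. -/
noncomputable def edgeCount {n : ℕ} (G : SimpleGraph (Fin n)) : ℕ := G.edgeSet.ncard

/-- `M_i(G)(f)`: the number of edges of `G` whose two endpoints both receive color `i`
under the coloring `f`. -/
noncomputable def monoEdges {n s : ℕ} (G : SimpleGraph (Fin n)) (i : Fin s)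
    (f : Fin n → Fin s) : ℕ :=
  {e ∈ G.edgeSet | ∀ v ∈ e, f v = i}.ncard

/-- `M(G)(f) = ∑ i, M_i(G)(f)`: the total number of monochromatic edges. -/
noncomputable def monoTotal {n s : ℕ} (G : SimpleGraph (Fin n)) (f : Fin n → Fin s) : ℕ :=
  ∑ i, monoEdges G i f

/-- `L(G)(f) = m - M(G)(f)`: the number of bichromatic edges. -/
noncomputable def biEdges {n s : ℕ} (G : SimpleGraph (Fin n)) (f : Fin n → Fin s) : ℝ :=
  (edgeCount G : ℝ) - (monoTotal G f : ℝ)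

/-- `Σ₂(G)`: the sum of the squares of the degrees of `G`. -/
noncomputable def sigma2 {n : ℕ} (G : SimpleGraph (Fin n)) : ℕ :=
  ∑ v, ((G.neighborSet v).ncard) ^ 2

/-- `ζ(G) = √(Σ₂(G)) / m`. -/
noncomputable def zeta {n : ℕ} (G : SimpleGraph (Fin n)) : ℝ :=
  Real.sqrt (sigma2 G) / (edgeCount G : ℝ)

/-!
Write `M_i` as a sum over edges of the indicator that both ends get colour `i`. Permuting the
vertices preserves the set of `c`-colourings, so the probability that a given `k`-set of vertices
is coloured `i` depends only on `k`; double counting over all `k`-sets makes it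
`q k = c_i^{(k)} / n^{(k)}`. Hence `E[M_i²]` is the sum of `q |e ∪ e'|` over ordered pairs of
edges, and `|e ∪ e'|` is `2`, `3` or `4` according as `e = e'`, the edges share one vertex, or
they are disjoint. Since `Σ₂(G)` counts ordered pairs of edges weighted by their number of common
vertices, the three kinds of pairs are counted by `m`, `Σ₂(G) - 2m` and `m² + m - Σ₂(G)`.
-/
section Colorings

variable {n s : ℕ} {c : Fin s → ℕ}

lemma mem_colorings {f : Fin n → Fin s} :
    f ∈ colorings n s c ↔ ∀ j, #{v | f v = j} = c j := by
  simp [colorings]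

lemma comp_perm_mem_colorings (σ : Equiv.Perm (Fin n)) {f : Fin n → Fin s}
    (hf : f ∈ colorings n s c) : f ∘ σ ∈ colorings n s c := by
  rw [mem_colorings] at hf ⊢
  intro j
  rw [← hf j]
  exact card_equiv σ (by simp)

lemma colorings_nonempty (hsum : ∑ j, c j = n) : (colorings n s c).Nonempty := by
  let e : (Σ j, Fin (c j)) ≃ Fin n := Fintype.equivOfCardEq (by simp [hsum])
  refine ⟨fun v => (e.symm v).1, mem_colorings.2 fun j => ?_⟩
  calc #{v | (e.symm v).1 = j} = #{x : Σ j, Fin (c j) | x.1 = j} := card_equiv e.symm (by simp)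
    _ = c j := by
      rw [card_filter, Fintype.sum_sigma]
      simp [apply_ite card]

lemma card_filter_colorings_forall_eq (i : Fin s) {T T' : Finset (Fin n)} (h : #T = #T') :
    #{f ∈ colorings n s c | ∀ v ∈ T, f v = i}
      = #{f ∈ colorings n s c | ∀ v ∈ T', f v = i} := by
  obtain ⟨σ, hσ⟩ := Equiv.Perm.exists_map_finset_eq T T' h
  subst hσ
  refine card_nbij' (· ∘ σ.symm) (· ∘ σ) (fun f hf => ?_) (fun f hf => ?_) (fun f _ => ?_)
    (fun f _ => ?_)
  · simp only [coe_filter, Set.mem_ofPred_eq] at hf ⊢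
    exact ⟨comp_perm_mem_colorings _ hf.1, by simpa using fun v hv => hf.2 _ hv⟩
  · simp only [coe_filter, Set.mem_ofPred_eq] at hf ⊢
    exact ⟨comp_perm_mem_colorings _ hf.1, fun v hv => hf.2 _ (by simpa using hv)⟩
  · ext; simp
  · ext; simp

lemma sum_card_filter_colorings_forall (i : Fin s) (k : ℕ) :
    ∑ T ∈ powersetCard k univ, #{f ∈ colorings n s c | ∀ v ∈ T, f v = i}
      = #(colorings n s c) * (c i).choose k := by
  have hfiber : ∀ f ∈ colorings n s c,
      #{T ∈ powersetCard k univ | ∀ v ∈ T, f v = i} = (c i).choose k := by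
    intro f hf
    rw [← mem_colorings.1 hf i, ← card_powersetCard]
    congr 1
    ext T
    simp [subset_iff, and_comm]
  simp_rw [card_filter]
  rw [sum_comm, sum_congr rfl fun f hf => (card_filter _ _).symm.trans (hfiber f hf),
    sum_const, smul_eq_mul]

lemma card_filter_colorings_forall_mul_descFactorial (i : Fin s) (T : Finset (Fin n)) :
    #{f ∈ colorings n s c | ∀ v ∈ T, f v = i} * n.descFactorial #T
      = #(colorings n s c) * (c i).descFactorial #T := by
  have hsym := sum_card_filter_colorings_forall (n := n) (c := c) i #T
  rw [sum_congr rfl fun T' hT' =>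
      card_filter_colorings_forall_eq (c := c) i (mem_powersetCard.1 hT').2, sum_const,
    card_powersetCard, card_univ, Fintype.card_fin, smul_eq_mul] at hsym
  rw [Nat.descFactorial_eq_factorial_mul_choose, Nat.descFactorial_eq_factorial_mul_choose,
    mul_left_comm, mul_comm _ (n.choose _), hsym, mul_left_comm]

theorem colProb_forall_eq (hsum : ∑ j, c j = n) (i : Fin s) (T : Finset (Fin n)) :
    colProb n s c (fun f => ∀ v ∈ T, f v = i)
      = ((c i).descFactorial #T : ℝ) / n.descFactorial #T := by
  have hN : (#(colorings n s c) : ℝ) ≠ 0 := by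
    exact_mod_cast (colorings_nonempty hsum).card_pos.ne'
  have hT : (n.descFactorial #T : ℝ) ≠ 0 := by
    simpa [Nat.descFactorial_eq_zero_iff_lt] using card_le_univ T
  rw [colProb, filter_congr_decidable, div_eq_div_iff hN hT]
  exact_mod_cast
    (card_filter_colorings_forall_mul_descFactorial (c := c) i T).trans (mul_comm _ _)

end Colorings

section Expectation

variable {n s : ℕ} {c : Fin s → ℕ}

lemma colExp_sum_ite {ι : Type*} (X : Finset ι) (E : ι → (Fin n → Fin s) → Prop)
    [∀ x f, Decidable (E x f)] :
    colExp n s c (fun f => ∑ x ∈ X, if E x f then (1 : ℝ) else 0)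
      = ∑ x ∈ X, colProb n s c (E x) := by
  rw [colExp, sum_comm, sum_div]
  simp only [colProb, sum_boole]
  -- `colProb` filters with the classical decidability instance
  congr!

lemma colVar_eq_colExp_sq_sub (hne : (colorings n s c).Nonempty) (Y : (Fin n → Fin s) → ℝ) :
    colVar n s c Y = colExp n s c (fun f => Y f ^ 2) - colExp n s c Y ^ 2 := by
  have hN : (#(colorings n s c) : ℝ) ≠ 0 := by exact_mod_cast hne.card_pos.ne'
  simp only [colVar, colExp, sub_sq, sum_add_distrib, sum_sub_distrib, ← sum_mul, ← mul_sum,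
    sum_const, nsmul_eq_mul]
  field_simp
  ring

end Expectation

lemma Sym2.card_toFinset_inter_le_one {α : Type*} [DecidableEq α] {e e' : Sym2 α}
    (hne : e ≠ e') : #(e.toFinset ∩ e'.toFinset) ≤ 1 := by
  refine card_le_one.2 fun a ha b hb => ?_
  by_contra hab
  simp only [mem_inter, Sym2.mem_toFinset] at ha hb
  exact hne (((Sym2.mem_and_mem_iff hab).1 ⟨ha.1, hb.1⟩).trans
    ((Sym2.mem_and_mem_iff hab).1 ⟨ha.2, hb.2⟩).symm)

namespace SimpleGraph

variable {V : Type*} [Fintype V] [DecidableEq V] {G : SimpleGraph V} [DecidableRel G.Adj]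

lemma card_toFinset_of_mem_edgeFinset {e : Sym2 V} (he : e ∈ G.edgeFinset) : #e.toFinset = 2 :=
  Sym2.card_toFinset_of_not_isDiag e (G.not_isDiag_of_mem_edgeSet (mem_edgeFinset.1 he))

-- The right side interpolates `g (4 - j)` at `j = #(e ∩ e') ∈ {0, 1, 2}`.
lemma apply_card_toFinset_union {R : Type*} [CommRing R] (g : ℕ → R) {e e' : Sym2 V}
    (he : e ∈ G.edgeFinset) (he' : e' ∈ G.edgeFinset) :
    g #(e.toFinset ∪ e'.toFinset) = g 4 + #(e.toFinset ∩ e'.toFinset) * (g 3 - g 4)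
      + if e = e' then g 2 - 2 * g 3 + g 4 else 0 := by
  by_cases h : e = e'
  · subst h
    simp [card_toFinset_of_mem_edgeFinset he]
    ring
  · have hunion := card_union_add_card_inter e.toFinset e'.toFinset
    rw [card_toFinset_of_mem_edgeFinset he, card_toFinset_of_mem_edgeFinset he'] at hunion
    have hinter := Sym2.card_toFinset_inter_le_one h
    interval_cases hk : #(e.toFinset ∩ e'.toFinset)
    · simp [h, show #(e.toFinset ∪ e'.toFinset) = 4 by omega]
    · simp [h, show #(e.toFinset ∪ e'.toFinset) = 3 by omega]

variable (G)

lemma sum_degree_sq_eq_sum_card_inter :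
    ∑ v, G.degree v ^ 2
      = ∑ p ∈ G.edgeFinset ×ˢ G.edgeFinset, #(p.1.toFinset ∩ p.2.toFinset) := by
  have hdeg : ∀ v, G.degree v ^ 2
      = #{p ∈ G.edgeFinset ×ˢ G.edgeFinset | v ∈ p.1 ∧ v ∈ p.2} := by
    intro v
    rw [← card_incidenceFinset_eq_degree, incidenceFinset_eq_filter, sq, ← card_product,
      ← filter_product]
  have hinter : ∀ p : Sym2 V × Sym2 V,
      #(p.1.toFinset ∩ p.2.toFinset) = #{v | v ∈ p.1 ∧ v ∈ p.2} := by
    intro p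
    congr 1
    ext v
    simp
  simp_rw [hdeg, hinter, card_filter]
  exact sum_comm

lemma sum_apply_card_toFinset_union {R : Type*} [CommRing R] (g : ℕ → R) :
    ∑ p ∈ G.edgeFinset ×ˢ G.edgeFinset, g #(p.1.toFinset ∪ p.2.toFinset)
      = #G.edgeFinset ^ 2 * g 4 + (∑ v, G.degree v ^ 2 : ℕ) * (g 3 - g 4)
        + #G.edgeFinset * (g 2 - 2 * g 3 + g 4) := by
  rw [sum_congr rfl fun p hp => apply_card_toFinset_union g (mem_product.1 hp).1
    (mem_product.1 hp).2, sum_degree_sq_eq_sum_card_inter]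
  simp only [sum_add_distrib, sum_product, sum_ite_eq, sum_ite_mem, inter_self, ← sum_mul,
    sum_const, nsmul_eq_mul, card_product]
  push_cast
  ring

end SimpleGraph

section MonoEdges

variable {n s : ℕ} (G : SimpleGraph (Fin n)) (i : Fin s)

lemma edgeCount_eq_card_edgeFinset : edgeCount G = #G.edgeFinset := by
  rw [edgeCount, ← SimpleGraph.coe_edgeFinset, Set.ncard_coe_finset]

lemma sigma2_eq_sum_degree_sq : sigma2 G = ∑ v, G.degree v ^ 2 := by
  simp only [sigma2, Set.ncard_eq_toFinset_card', ← SimpleGraph.neighborFinset_def,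
    SimpleGraph.card_neighborFinset_eq_degree]

lemma monoEdges_eq_sum (f : Fin n → Fin s) :
    (monoEdges G i f : ℝ)
      = ∑ e ∈ G.edgeFinset, if ∀ v ∈ e.toFinset, f v = i then 1 else 0 := by
  have hset : {e ∈ G.edgeSet | ∀ v ∈ e, f v = i}
      = ↑{e ∈ G.edgeFinset | ∀ v ∈ e.toFinset, f v = i} := by
    ext e
    simp
  rw [monoEdges, hset, Set.ncard_coe_finset, sum_boole]

lemma monoEdges_sq_eq_sum (f : Fin n → Fin s) :
    (monoEdges G i f : ℝ) ^ 2 = ∑ p ∈ G.edgeFinset ×ˢ G.edgeFinset,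
      if ∀ v ∈ p.1.toFinset ∪ p.2.toFinset, f v = i then 1 else 0 := by
  simp only [monoEdges_eq_sum, sq, sum_mul_sum, sum_product, ite_zero_mul_ite_zero, mul_one,
    forall_mem_union]

variable {c : Fin s → ℕ} (hsum : ∑ j, c j = n)
include hsum

lemma colExp_monoEdges :
    colExp n s c (fun f => (monoEdges G i f : ℝ))
      = #G.edgeFinset * (((c i).descFactorial 2 : ℝ) / n.descFactorial 2) := by
  simp only [monoEdges_eq_sum, colExp_sum_ite, colProb_forall_eq hsum]
  rw [sum_congr rfl fun e he => by rw [SimpleGraph.card_toFinset_of_mem_edgeFinset he],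
    sum_const, nsmul_eq_mul]

lemma colExp_monoEdges_sq :
    colExp n s c (fun f => (monoEdges G i f : ℝ) ^ 2)
      = ∑ p ∈ G.edgeFinset ×ˢ G.edgeFinset,
          ((c i).descFactorial #(p.1.toFinset ∪ p.2.toFinset) : ℝ)
            / n.descFactorial #(p.1.toFinset ∪ p.2.toFinset) := by
  simp only [monoEdges_sq_eq_sum, colExp_sum_ite, colProb_forall_eq hsum]

end MonoEdges

lemma Nat.cast_descFactorial_succ {R : Type*} [CommRing R] (a k : ℕ) :
    (a.descFactorial (k + 1) : R) = a.descFactorial k * (a - k) := by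
  simp only [← descPochhammer_eval_eq_descFactorial, descPochhammer_succ_eval]

lemma Nat.cast_descFactorial_mul_sub_div {R : Type*} [Field R] [CharZero R] {a n : ℕ}
    (h : a < n) (k : ℕ) :
    (a.descFactorial k : R) * (n - a) / n.descFactorial (k + 1)
      = a.descFactorial k / n.descFactorial k
        - a.descFactorial (k + 1) / n.descFactorial (k + 1) := by
  rcases le_or_gt n k with hnk | hkn
  · have ha : a.descFactorial k = 0 := Nat.descFactorial_eq_zero_iff_lt.2 (by omega)
    simp [ha]
  · have hdesc : (n.descFactorial k : R) ≠ 0 := by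
      simpa [Nat.descFactorial_eq_zero_iff_lt] using hkn.le
    have hsub : (n : R) - k ≠ 0 := sub_ne_zero.2 (by exact_mod_cast hkn.ne')
    rw [Nat.cast_descFactorial_succ, Nat.cast_descFactorial_succ]
    field_simp
    ring

theorem stmt7_general (n s : ℕ) (hs2 : 2 ≤ s)
    (c : Fin s → ℕ) (hpos : ∀ i, 0 < c i) (hsum : ∑ i, c i = n)
    (G : SimpleGraph (Fin n)) (m : ℕ) (hm : m = edgeCount G) (i : Fin s) :
    colVar n s c (fun f => (monoEdges G i f : ℝ))
      = (((c i).descFactorial 3 : ℝ) * ((n : ℝ) - (c i : ℝ)) / (n.descFactorial 4 : ℝ))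
            * (sigma2 G : ℝ)
        - ((((c i).descFactorial 2 : ℝ) / (n.descFactorial 2 : ℝ)) ^ 2
            - ((c i).descFactorial 4 : ℝ) / (n.descFactorial 4 : ℝ)) * (m : ℝ) ^ 2
        + (((c i).descFactorial 2 : ℝ) / (n.descFactorial 2 : ℝ)
            - 2 * ((c i).descFactorial 3 : ℝ) / (n.descFactorial 3 : ℝ)
            + ((c i).descFactorial 4 : ℝ) / (n.descFactorial 4 : ℝ)) * (m : ℝ) := by
  have hlt : c i < n := by
    have : Nontrivial (Fin s) := Fin.nontrivial_iff_two_le.2 hs2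
    obtain ⟨j, hj⟩ := exists_ne i
    exact hsum ▸ single_lt_sum hj (mem_univ i) (mem_univ j) (hpos j) fun _ _ _ => Nat.zero_le _
  have h34 : ((c i).descFactorial 3 : ℝ) * (n - c i) / n.descFactorial 4
      = ((c i).descFactorial 3 : ℝ) / n.descFactorial 3
        - ((c i).descFactorial 4 : ℝ) / n.descFactorial 4 :=
    Nat.cast_descFactorial_mul_sub_div hlt 3
  rw [colVar_eq_colExp_sq_sub (colorings_nonempty hsum), colExp_monoEdges_sq G i hsum,
    colExp_monoEdges G i hsum,
    G.sum_apply_card_toFinset_union fun k => ((c i).descFactorial k : ℝ) / n.descFactorial k,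
    h34, sigma2_eq_sum_degree_sq, hm, edgeCount_eq_card_edgeFinset]
  ring

/-- The variance of `M_i(G)` under a uniformly random `c`-coloring equals
`(c_i^{(3)}(n-c_i)/n^{(4)}) Σ₂(G) - ([c_i^{(2)}/n^{(2)}]² - c_i^{(4)}/n^{(4)}) m²
  + (c_i^{(2)}/n^{(2)} - 2 c_i^{(3)}/n^{(3)} + c_i^{(4)}/n^{(4)}) m`. -/
theorem stmt7 (n s : ℕ) (hs2 : 2 ≤ s) (hsn : s ≤ n)
    (c : Fin s → ℕ) (hpos : ∀ i, 0 < c i) (hsum : ∑ i, c i = n)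
    (G : SimpleGraph (Fin n)) (m : ℕ) (hm : m = edgeCount G) (i : Fin s) :
    colVar n s c (fun f => (monoEdges G i f : ℝ))
      = (((c i).descFactorial 3 : ℝ) * ((n : ℝ) - (c i : ℝ)) / (n.descFactorial 4 : ℝ))
            * (sigma2 G : ℝ)
        - ((((c i).descFactorial 2 : ℝ) / (n.descFactorial 2 : ℝ)) ^ 2
            - ((c i).descFactorial 4 : ℝ) / (n.descFactorial 4 : ℝ)) * (m : ℝ) ^ 2
        + (((c i).descFactorial 2 : ℝ) / (n.descFactorial 2 : ℝ)
            - 2 * ((c i).descFactorial 3 : ℝ) / (n.descFactorial 3 : ℝ)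
            + ((c i).descFactorial 4 : ℝ) / (n.descFactorial 4 : ℝ)) * (m : ℝ) :=
  stmt7_general n s hs2 c hpos hsum G m hm i
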